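/- In the Fomin–Kirillov algebra FK(3), the homogeneous components with respect to the grading placing a, b, c in degree 1 have dimensions 1, 3, 4, 3, 1 in degrees 0, 1, 2, 3, 4 respectively, and are zero in all other degrees. In particular the Hilbert series of FK(3) is 1 + 3t + 4t² + 3t³ + t⁴. -/

import Mathlib

/-!
Write `a, b, c` for the generators. Using the relations, each generator times each of the twelve
normal words `1, a, b, c, ba, bc, ca, cb, bca, cba, cbc, cbca` is an integer combination of
normal words one letter longer (for instance `a·ba = -bca`, `a·cbc = -cbca`, `a·bca = 0`), so by
induction the degree-`n` component is spanned by the normal words of length `n`. Conversely,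
the integer matrices recording this multiplication table satisfy the defining relations; in the
resulting representation of `FK(3)` the normal word `w_j` sends `e₀` to `e_j`, so the normal words
are linearly independent.
-/

open FreeAlgebra

/-- The defining relations of the Fomin–Kirillov algebra `FK(3)`. -/
inductive FKRel (k : Type) [Field k] : FreeAlgebra k (Fin 3) → FreeAlgebra k (Fin 3) → Prop
  | sq_a : FKRel k (ι k (0 : Fin 3) * ι k (0 : Fin 3)) 0
  | sq_b : FKRel k (ι k (1 : Fin 3) * ι k (1 : Fin 3)) 0
  | sq_c : FKRel k (ι k (2 : Fin 3) * ι k (2 : Fin 3)) 0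
  | rel1 : FKRel k (ι k (0 : Fin 3) * ι k (1 : Fin 3) + ι k (1 : Fin 3) * ι k (2 : Fin 3) +
      ι k (2 : Fin 3) * ι k (0 : Fin 3)) 0
  | rel2 : FKRel k (ι k (1 : Fin 3) * ι k (0 : Fin 3) + ι k (0 : Fin 3) * ι k (2 : Fin 3) +
      ι k (2 : Fin 3) * ι k (1 : Fin 3)) 0

/-- The Fomin–Kirillov algebra on three generators. -/
abbrev FK3 (k : Type) [Field k] := RingQuot (FKRel k)

variable (k : Type) [Field k]

/-- The three generators of `FK(3)`. -/
noncomputable def FKgen : Fin 3 → FK3 k := fun i => RingQuot.mkAlgHom k (FKRel k) (ι k i)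

/-- The homogeneous component of `FK(3)` of (internal) degree `n`: the span of all products of
`n` generators. -/
noncomputable def FK3Component (n : ℕ) : Submodule k (FK3 k) :=
  Submodule.span k
    {z : FK3 k | ∃ l : List (Fin 3), l.length = n ∧ z = (l.map (FKgen k)).prod}

structure IsFK3Triple {R : Type*} [Ring R] (a b c : R) : Prop where
  sq_a : a * a = 0
  sq_b : b * b = 0
  sq_c : c * c = 0
  rel₁ : a * b + b * c + c * a = 0
  rel₂ : b * a + a * c + c * b = 0

theorem IsFK3Triple.map {R S : Type*} [Ring R] [Ring S] {a b c : R} (h : IsFK3Triple a b c)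
    (f : R →+* S) : IsFK3Triple (f a) (f b) (f c) where
  sq_a := by rw [← map_mul, h.sq_a, map_zero]
  sq_b := by rw [← map_mul, h.sq_b, map_zero]
  sq_c := by rw [← map_mul, h.sq_c, map_zero]
  rel₁ := by simp only [← map_mul, ← map_add, h.rel₁, map_zero]
  rel₂ := by simp only [← map_mul, ← map_add, h.rel₂, map_zero]

theorem mul_mul_eq_zero_of_mul_self_eq_zero {R : Type*} [SemigroupWithZero R] {z : R}
    (h : z * z = 0) (y : R) : z * (z * y) = 0 := by
  rw [← mul_assoc, h, zero_mul]

namespace IsFK3Triple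

variable {R : Type*} [Ring R] {a b c : R} (h : IsFK3Triple a b c)
include h

theorem ab_eq : a * b = -(b * c) - c * a := by
  linear_combination (norm := noncomm_ring) h.rel₁

theorem ac_eq : a * c = -(b * a) - c * b := by
  linear_combination (norm := noncomm_ring) h.rel₂

theorem aba_eq : a * (b * a) = -(b * (c * a)) := by
  linear_combination (norm := noncomm_ring) h.rel₁ * a - c * h.sq_a

theorem abc_eq : a * (b * c) = c * (b * a) := by
  linear_combination (norm := noncomm_ring) h.rel₁ * c - c * h.rel₂ - b * h.sq_c + h.sq_c * b

theorem aca_eq : a * (c * a) = -(c * (b * a)) := by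
  linear_combination (norm := noncomm_ring) a * h.rel₁ - h.sq_a * b - h.abc_eq

theorem acb_eq : a * (c * b) = b * (c * a) := by
  linear_combination (norm := noncomm_ring) a * h.rel₂ - h.sq_a * c - h.aba_eq

theorem bcb_eq : b * (c * b) = c * (b * c) := by
  linear_combination (norm := noncomm_ring) h.rel₁ * b - c * h.rel₁ - a * h.sq_b + h.sq_c * a

theorem abca_eq : a * (b * (c * a)) = 0 := by
  linear_combination (norm := noncomm_ring) h.rel₁ * (c * a) - b * h.sq_c * a - c * h.aca_eq
    + h.sq_c * (b * a)

theorem acba_eq : a * (c * (b * a)) = 0 := by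
  linear_combination (norm := noncomm_ring) h.rel₂ * (b * a) - b * h.aba_eq - c * h.sq_b * a
    + h.sq_b * (c * a)

theorem acbc_eq : a * (c * (b * c)) = -(c * (b * (c * a))) := by
  linear_combination (norm := noncomm_ring) h.acb_eq * c + b * c * h.rel₂ - b * h.sq_c * b
    - h.bcb_eq * a

theorem bcba_eq : b * (c * (b * a)) = c * (b * (c * a)) := by
  linear_combination (norm := noncomm_ring) h.bcb_eq * a

theorem bcbc_eq : b * (c * (b * c)) = 0 := by
  linear_combination (norm := noncomm_ring) h.bcb_eq * c + c * b * h.sq_c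

theorem acbca_eq : a * (c * (b * (c * a))) = 0 := by
  linear_combination (norm := noncomm_ring) h.acb_eq * (c * a) + b * c * h.aca_eq
    - b * h.sq_c * (b * a)

theorem bcbca_eq : b * (c * (b * (c * a))) = 0 := by
  linear_combination (norm := noncomm_ring) h.bcb_eq * (c * a) + c * b * h.sq_c * a

end IsFK3Triple

def normalWord : Fin 12 → List (Fin 3) :=
  ![[], [0], [1], [2], [1, 0], [1, 2], [2, 0], [2, 1], [1, 2, 0], [2, 1, 0], [2, 1, 2],
    [2, 1, 2, 0]]

theorem length_normalWord_le (j : Fin 12) : (normalWord j).length ≤ 4 := by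
  revert j; decide

def word {R : Type*} [Monoid R] (x : Fin 3 → R) (j : Fin 12) : R :=
  ((normalWord j).map x).prod

/-- Column `j` of `fkMatrix i` lists the coefficients of `x i * word x j` in the normal words
(`IsFK3Triple.mul_word`). -/
def fkMatrix : Fin 3 → Matrix (Fin 12) (Fin 12) ℤ :=
  ![!![0, 0, 0, 0, 0, 0, 0, 0, 0, 0, 0, 0;
    1, 0, 0, 0, 0, 0, 0, 0, 0, 0, 0, 0;
    0, 0, 0, 0, 0, 0, 0, 0, 0, 0, 0, 0;
    0, 0, 0, 0, 0, 0, 0, 0, 0, 0, 0, 0;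
    0, 0, 0, -1, 0, 0, 0, 0, 0, 0, 0, 0;
    0, 0, -1, 0, 0, 0, 0, 0, 0, 0, 0, 0;
    0, 0, -1, 0, 0, 0, 0, 0, 0, 0, 0, 0;
    0, 0, 0, -1, 0, 0, 0, 0, 0, 0, 0, 0;
    0, 0, 0, 0, -1, 0, 0, 1, 0, 0, 0, 0;
    0, 0, 0, 0, 0, 1, -1, 0, 0, 0, 0, 0;
    0, 0, 0, 0, 0, 0, 0, 0, 0, 0, 0, 0;
    0, 0, 0, 0, 0, 0, 0, 0, 0, 0, -1, 0],
  !![0, 0, 0, 0, 0, 0, 0, 0, 0, 0, 0, 0;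
    0, 0, 0, 0, 0, 0, 0, 0, 0, 0, 0, 0;
    1, 0, 0, 0, 0, 0, 0, 0, 0, 0, 0, 0;
    0, 0, 0, 0, 0, 0, 0, 0, 0, 0, 0, 0;
    0, 1, 0, 0, 0, 0, 0, 0, 0, 0, 0, 0;
    0, 0, 0, 1, 0, 0, 0, 0, 0, 0, 0, 0;
    0, 0, 0, 0, 0, 0, 0, 0, 0, 0, 0, 0;
    0, 0, 0, 0, 0, 0, 0, 0, 0, 0, 0, 0;
    0, 0, 0, 0, 0, 0, 1, 0, 0, 0, 0, 0;
    0, 0, 0, 0, 0, 0, 0, 0, 0, 0, 0, 0;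
    0, 0, 0, 0, 0, 0, 0, 1, 0, 0, 0, 0;
    0, 0, 0, 0, 0, 0, 0, 0, 0, 1, 0, 0],
  !![0, 0, 0, 0, 0, 0, 0, 0, 0, 0, 0, 0;
    0, 0, 0, 0, 0, 0, 0, 0, 0, 0, 0, 0;
    0, 0, 0, 0, 0, 0, 0, 0, 0, 0, 0, 0;
    1, 0, 0, 0, 0, 0, 0, 0, 0, 0, 0, 0;
    0, 0, 0, 0, 0, 0, 0, 0, 0, 0, 0, 0;
    0, 0, 0, 0, 0, 0, 0, 0, 0, 0, 0, 0;
    0, 1, 0, 0, 0, 0, 0, 0, 0, 0, 0, 0;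
    0, 0, 1, 0, 0, 0, 0, 0, 0, 0, 0, 0;
    0, 0, 0, 0, 0, 0, 0, 0, 0, 0, 0, 0;
    0, 0, 0, 0, 1, 0, 0, 0, 0, 0, 0, 0;
    0, 0, 0, 0, 0, 1, 0, 0, 0, 0, 0, 0;
    0, 0, 0, 0, 0, 0, 0, 0, 1, 0, 0, 0]]

theorem isFK3Triple_fkMatrix : IsFK3Triple (fkMatrix 0) (fkMatrix 1) (fkMatrix 2) where
  sq_a := by decide
  sq_b := by decide
  sq_c := by decide
  rel₁ := by decide
  rel₂ := by decide

theorem length_normalWord_of_fkMatrix_ne_zero (i : Fin 3) (j l : Fin 12)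
    (h : fkMatrix i l j ≠ 0) :
    (normalWord l).length = (normalWord j).length + 1 := by
  revert i j l h; decide

theorem word_fkMatrix_apply_zero (l j : Fin 12) :
    word fkMatrix j l 0 = if l = j then 1 else 0 := by
  revert l j; decide

theorem IsFK3Triple.mul_word {R : Type*} [Ring R] {x : Fin 3 → R}
    (h : IsFK3Triple (x 0) (x 1) (x 2)) (i : Fin 3) (j : Fin 12) :
    x i * word x j = ∑ l, fkMatrix i l j • word x l := by
  fin_cases i <;> fin_cases j <;>
    simp [Fin.sum_univ_succ, fkMatrix, word, normalWord, sub_eq_add_neg, h.sq_a, h.sq_b, h.sq_c,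
      mul_mul_eq_zero_of_mul_self_eq_zero h.sq_b,
      mul_mul_eq_zero_of_mul_self_eq_zero h.sq_c, h.ab_eq, h.ac_eq, h.aba_eq, h.abc_eq, h.aca_eq,
      h.acb_eq, h.bcb_eq, h.abca_eq, h.acba_eq, h.acbc_eq, h.bcba_eq, h.bcbc_eq, h.acbca_eq,
      h.bcbca_eq]

namespace FK3

variable {k}

theorem isFK3Triple_FKgen : IsFK3Triple (FKgen k 0) (FKgen k 1) (FKgen k 2) where
  sq_a := by simpa [FKgen] using RingQuot.mkAlgHom_rel k (FKRel.sq_a (k := k))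
  sq_b := by simpa [FKgen] using RingQuot.mkAlgHom_rel k (FKRel.sq_b (k := k))
  sq_c := by simpa [FKgen] using RingQuot.mkAlgHom_rel k (FKRel.sq_c (k := k))
  rel₁ := by simpa [FKgen] using RingQuot.mkAlgHom_rel k (FKRel.rel1 (k := k))
  rel₂ := by simpa [FKgen] using RingQuot.mkAlgHom_rel k (FKRel.rel2 (k := k))

section lift

variable {A : Type*} [Ring A] [Algebra k A] {x : Fin 3 → A} (h : IsFK3Triple (x 0) (x 1) (x 2))

noncomputable def lift : FK3 k →ₐ[k] A :=
  RingQuot.liftAlgHom k ⟨FreeAlgebra.lift k x, fun _ _ r => by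
    cases r <;> simp [h.sq_a, h.sq_b, h.sq_c, h.rel₁, h.rel₂]⟩

theorem lift_FKgen (i : Fin 3) : lift h (FKgen k i) = x i := by
  simp [lift, FKgen]

theorem lift_word (j : Fin 12) : lift h (word (FKgen k) j) = word x j := by
  simp [word, map_list_prod, Function.comp_def, lift_FKgen]

end lift

noncomputable def normalSpan (n : ℕ) : Submodule k (FK3 k) :=
  Submodule.span k
    (Set.range fun j : {j : Fin 12 // (normalWord j).length = n} => word (FKgen k) j)

theorem FKgen_mul_mem_normalSpan (i : Fin 3) {n : ℕ} {z : FK3 k} (hz : z ∈ normalSpan n) :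
    FKgen k i * z ∈ normalSpan (n + 1) := by
  suffices normalSpan n ≤ (normalSpan (n + 1)).comap (LinearMap.mulLeft k (FKgen k i)) from
    this hz
  refine Submodule.span_le.mpr ?_
  rintro _ ⟨⟨j, hj⟩, rfl⟩
  simp only [SetLike.mem_coe, Submodule.mem_comap, LinearMap.mulLeft_apply,
    isFK3Triple_FKgen.mul_word]
  refine Submodule.sum_mem _ fun l _ => ?_
  by_cases hM : fkMatrix i l j = 0
  · simp [hM]
  have hl : (normalWord l).length = n + 1 := by
    rw [length_normalWord_of_fkMatrix_ne_zero i j l hM, hj]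
  exact zsmul_mem (show word (FKgen k) l ∈ normalSpan (n + 1) from
    Submodule.subset_span ⟨⟨l, hl⟩, rfl⟩) _

theorem component_le_normalSpan (n : ℕ) : FK3Component k n ≤ normalSpan n := by
  refine Submodule.span_le.mpr ?_
  rintro _ ⟨l, rfl, rfl⟩
  induction l with
  | nil => exact Submodule.subset_span ⟨⟨0, rfl⟩, rfl⟩
  | cons i l ih => simpa using FKgen_mul_mem_normalSpan i ih

theorem linearIndependent_word : LinearIndependent k (word (FKgen k)) := by
  let ρ := lift (k := k) (x := fun i => (Int.castRingHom k).mapMatrix (fkMatrix i))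
    (isFK3Triple_fkMatrix.map (Int.castRingHom k).mapMatrix)
  let firstColumn : Matrix (Fin 12) (Fin 12) k →ₗ[k] Fin 12 → k :=
    LinearMap.pi fun l => Matrix.entryLinearMap k k l 0
  refine LinearIndependent.of_comp (firstColumn ∘ₗ ρ.toLinearMap) ?_
  convert (Pi.basisFun k (Fin 12)).linearIndependent
  ext j l
  have hρ : ρ (word (FKgen k) j) = (Int.castRingHom k).mapMatrix (word fkMatrix j) := by
    rw [lift_word, word, word, map_list_prod, List.map_map]
    rfl
  simp [firstColumn, hρ, word_fkMatrix_apply_zero, Pi.single_apply, apply_ite]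

theorem component_eq_normalSpan (n : ℕ) : FK3Component k n = normalSpan n := by
  refine le_antisymm (component_le_normalSpan n) (Submodule.span_le.mpr ?_)
  rintro _ ⟨⟨j, rfl⟩, rfl⟩
  exact Submodule.subset_span ⟨normalWord j, rfl, rfl⟩

theorem finrank_component (n : ℕ) :
    Module.finrank k (FK3Component k n) =
      Fintype.card {j : Fin 12 // (normalWord j).length = n} := by
  rw [component_eq_normalSpan, normalSpan]
  exact finrank_span_eq_card (linearIndependent_word.comp _ Subtype.val_injective)

end FK3

theorem FK3_component_finrank :
    Module.finrank k (FK3Component k 0) = 1 ∧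
    Module.finrank k (FK3Component k 1) = 3 ∧
    Module.finrank k (FK3Component k 2) = 4 ∧
    Module.finrank k (FK3Component k 3) = 3 ∧
    Module.finrank k (FK3Component k 4) = 1 ∧
    ∀ n : ℕ, 5 ≤ n → FK3Component k n = ⊥ := by
  simp only [FK3.finrank_component]
  refine ⟨by decide, by decide, by decide, by decide, by decide, fun n hn => ?_⟩
  have : IsEmpty {j : Fin 12 // (normalWord j).length = n} :=
    ⟨fun ⟨j, hj⟩ => by have := length_normalWord_le j; omega⟩
  rw [FK3.component_eq_normalSpan, FK3.normalSpan, Set.range_eq_empty, Submodule.span_empty]
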